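/- For finite random variables W1, W2, S^n, Y^n with W1, W2, S^n mutually independent, W1 uniform on M1 values, and X^n a deterministic function of (W1, W2, S^n), in a memoryless channel Y_j depending only on (X_j, S_j): H(W1) ≤ Σ_{j=1}^n I(X_j ; Y_j | S_j, U_j) + n·ε_n, where U_j := (W2, S^{j−1}, S_{j+1}^n) and n·ε_n bounds H(W1 | W2, S^n, Y^n) via Fano's inequality. -/

import Mathlib

/-!
Write `Z = (W2, S^n)`. Then `H(W1) = I(W1; Z, Y^n) + H(W1 | Z, Y^n)`, and since `W1` is
independent of `Z`, `I(W1; Z, Y^n) = I(W1; Y^n | Z) = ∑_j I(W1; Y_j | Z, Y^{j-1})` by the chain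
rule. Each summand is at most
`I(X_j, W1, Y^{≠j}; Y_j | Z) = I(X_j; Y_j | Z) + I(W1, Y^{≠j}; Y_j | Z, X_j)`,
and the last term vanishes: given `(Z, X_j)` the joint law factors into a function of
`(W1, Y^{≠j})` times the channel law `ch (Y_j) (X_j, S_j)`. Finally, conditioning on `Z` is
conditioning on `(S_j, U_j)`.

All entropies are averages `-∑ ω, p ω * logb 2 (pr p X (X ω))`, so they depend on a random
variable only through its level sets: regrouping a tuple, or adjoining to it a function of its
entries, leaves them unchanged.
-/

open scoped BigOperators

set_option synthInstance.maxSize 2048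

namespace IE

variable {Ω : Type*} [Fintype Ω]

/-- Probability that the random variable `X` takes the value `x`, under pmf `p`. -/
noncomputable def pr {α : Type*} [DecidableEq α] (p : Ω → ℝ) (X : Ω → α) (x : α) : ℝ :=
  ∑ ω : Ω, if X ω = x then p ω else 0

/-- Shannon entropy (base 2) of a random variable. -/
noncomputable def ent {α : Type*} [Fintype α] [DecidableEq α] (p : Ω → ℝ) (X : Ω → α) : ℝ :=
  -∑ x : α, pr p X x * Real.logb 2 (pr p X x)

/-- Conditional entropy H(X | Z). -/
noncomputable def cent {α β : Type*} [Fintype α] [DecidableEq α] [Fintype β] [DecidableEq β]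
    (p : Ω → ℝ) (X : Ω → α) (Z : Ω → β) : ℝ :=
  ent p (fun ω => (X ω, Z ω)) - ent p Z

/-- Mutual information I(X ; Y). -/
noncomputable def mi {α β : Type*} [Fintype α] [DecidableEq α] [Fintype β] [DecidableEq β]
    (p : Ω → ℝ) (X : Ω → α) (Y : Ω → β) : ℝ :=
  ent p X + ent p Y - ent p (fun ω => (X ω, Y ω))

/-- Conditional mutual information I(X ; Y | Z). -/
noncomputable def cmi {α β γ : Type*} [Fintype α] [DecidableEq α] [Fintype β] [DecidableEq β]
    [Fintype γ] [DecidableEq γ] (p : Ω → ℝ) (X : Ω → α) (Y : Ω → β) (Z : Ω → γ) : ℝ :=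
  ent p (fun ω => (X ω, Z ω)) + ent p (fun ω => (Y ω, Z ω))
    - ent p (fun ω => (X ω, Y ω, Z ω)) - ent p Z

/-- `p` is a probability mass function on `Ω`. -/
def IsPMF (p : Ω → ℝ) : Prop := (∀ ω, 0 ≤ p ω) ∧ ∑ ω : Ω, p ω = 1

section Probability

variable {α β : Type*} [DecidableEq α] [DecidableEq β] (p : Ω → ℝ)

noncomputable def prAt (X : Ω → α) (ω : Ω) : ℝ := pr p X (X ω)

lemma pr_nonneg (hp0 : ∀ ω, 0 ≤ p ω) (X : Ω → α) (x : α) : 0 ≤ pr p X x :=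
  Finset.sum_nonneg fun ω _ => by split_ifs <;> simp [hp0 ω]

lemma le_prAt (hp0 : ∀ ω, 0 ≤ p ω) (X : Ω → α) (ω : Ω) : p ω ≤ prAt p X ω := by
  have := Finset.single_le_sum (f := fun ω' => if X ω' = X ω then p ω' else 0)
    (fun ω' _ => by split_ifs <;> simp [hp0 ω']) (Finset.mem_univ ω)
  simpa [prAt, pr] using this

lemma prAt_pos (hp0 : ∀ ω, 0 ≤ p ω) (X : Ω → α) {ω : Ω} (hω : 0 < p ω) : 0 < prAt p X ω :=
  hω.trans_le (le_prAt p hp0 X ω)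

lemma pr_congr {X : Ω → α} {Y : Ω → β} {x : α} {y : β} (h : ∀ ω, X ω = x ↔ Y ω = y) :
    pr p X x = pr p Y y :=
  Finset.sum_congr rfl fun ω _ => if_congr (h ω) rfl rfl

lemma pr_eq_zero {X : Ω → α} {x : α} (h : ∀ ω, X ω ≠ x) : pr p X x = 0 :=
  Finset.sum_eq_zero fun ω _ => if_neg (h ω)

lemma prAt_congr {X : Ω → α} {Y : Ω → β} (h : ∀ ω ω', X ω = X ω' ↔ Y ω = Y ω') :
    prAt p X = prAt p Y :=
  funext fun ω => pr_congr p fun ω' => h ω' ω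

lemma sum_pr_mul [Fintype α] (X : Ω → α) (F : α → ℝ) :
    ∑ x, pr p X x * F x = ∑ ω, p ω * F (X ω) := by
  simp only [pr, Finset.sum_mul, ite_mul, zero_mul]
  rw [Finset.sum_comm]
  simp

lemma sum_pr [Fintype α] (X : Ω → α) : ∑ x, pr p X x = ∑ ω, p ω := by
  simpa using sum_pr_mul p X fun _ => 1

lemma pr_eq_sum_pr_prod [Fintype β] (X : Ω → α) (B : Ω → β) (x : α) :
    pr p X x = ∑ b, pr p (fun ω => (B ω, X ω)) (b, x) := by
  simp only [pr, Prod.mk.injEq, ite_and]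
  rw [Finset.sum_comm]
  simp

lemma pr_eq_sum_pr_prod_right [Fintype β] (X : Ω → α) (B : Ω → β) (x : α) :
    pr p X x = ∑ b, pr p (fun ω => (X ω, B ω)) (x, b) := by
  simp only [pr, Prod.mk.injEq, ite_and]
  rw [Finset.sum_comm]
  simp

end Probability

section Entropy

variable {α β γ δ α' β' γ' : Type*}
  [Fintype α] [DecidableEq α] [Fintype β] [DecidableEq β] [Fintype γ] [DecidableEq γ]
  [Fintype δ] [DecidableEq δ] [Fintype α'] [DecidableEq α'] [Fintype β'] [DecidableEq β']
  [Fintype γ'] [DecidableEq γ'] (p : Ω → ℝ)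

lemma ent_eq_sum (X : Ω → α) : ent p X = -∑ ω, p ω * Real.logb 2 (prAt p X ω) :=
  congrArg Neg.neg (sum_pr_mul p X fun x => Real.logb 2 (pr p X x))

lemma ent_congr {X : Ω → α} {Y : Ω → β} (h : ∀ ω ω', X ω = X ω' ↔ Y ω = Y ω') :
    ent p X = ent p Y := by
  rw [ent_eq_sum, ent_eq_sum, prAt_congr p h]

lemma mi_congr {A : Ω → α} {B : Ω → β} {A' : Ω → α'} {B' : Ω → β'}
    (hA : ∀ ω ω', A ω = A ω' ↔ A' ω = A' ω') (hB : ∀ ω ω', B ω = B ω' ↔ B' ω = B' ω') :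
    mi p A B = mi p A' B' := by
  unfold mi
  congr 1; congr 1
  all_goals exact ent_congr p fun ω ω' => by simp only [Prod.mk.injEq, hA, hB]

lemma cmi_congr {A : Ω → α} {B : Ω → β} {C : Ω → γ} {A' : Ω → α'} {B' : Ω → β'} {C' : Ω → γ'}
    (hA : ∀ ω ω', A ω = A ω' ↔ A' ω = A' ω') (hB : ∀ ω ω', B ω = B ω' ↔ B' ω = B' ω')
    (hC : ∀ ω ω', C ω = C ω' ↔ C' ω = C' ω') :
    cmi p A B C = cmi p A' B' C' := by
  unfold cmi
  congr 1; congr 1; congr 1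
  all_goals exact ent_congr p fun ω ω' => by simp only [Prod.mk.injEq, hA, hB, hC]

lemma cmi_eq_sum (A : Ω → α) (B : Ω → β) (C : Ω → γ) :
    cmi p A B C = ∑ ω, p ω * (Real.logb 2 (prAt p (fun ω => (A ω, B ω, C ω)) ω)
      + Real.logb 2 (prAt p C ω) - Real.logb 2 (prAt p (fun ω => (A ω, C ω)) ω)
      - Real.logb 2 (prAt p (fun ω => (B ω, C ω)) ω)) := by
  simp only [cmi, ent_eq_sum, mul_add, mul_sub, Finset.sum_add_distrib, Finset.sum_sub_distrib]
  ring

lemma cmi_comm (A : Ω → α) (B : Ω → β) (C : Ω → γ) : cmi p A B C = cmi p B A C := by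
  unfold cmi
  rw [ent_congr p (X := fun ω => (A ω, B ω, C ω)) (Y := fun ω => (B ω, A ω, C ω))
    fun ω ω' => by simp only [Prod.mk.injEq]; tauto]
  ring

lemma cmi_prod_left (A : Ω → α) (D : Ω → δ) (B : Ω → β) (C : Ω → γ) :
    cmi p (fun ω => (A ω, D ω)) B C = cmi p A B C + cmi p D B (fun ω => (C ω, A ω)) := by
  have e₁ : ent p (fun ω => (D ω, C ω, A ω)) = ent p (fun ω => ((A ω, D ω), C ω)) :=
    ent_congr p fun ω ω' => by simp only [Prod.mk.injEq]; tauto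
  have e₂ : ent p (fun ω => (B ω, C ω, A ω)) = ent p (fun ω => (A ω, B ω, C ω)) :=
    ent_congr p fun ω ω' => by simp only [Prod.mk.injEq]; tauto
  have e₃ : ent p (fun ω => (D ω, B ω, C ω, A ω)) = ent p (fun ω => ((A ω, D ω), B ω, C ω)) :=
    ent_congr p fun ω ω' => by simp only [Prod.mk.injEq]; tauto
  have e₄ : ent p (fun ω => (C ω, A ω)) = ent p (fun ω => (A ω, C ω)) :=
    ent_congr p fun ω ω' => by simp only [Prod.mk.injEq]; tauto
  unfold cmi
  rw [e₁, e₂, e₃, e₄]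
  ring

lemma cmi_prod_right (A : Ω → α) (B : Ω → β) (D : Ω → δ) (C : Ω → γ) :
    cmi p A (fun ω => (B ω, D ω)) C = cmi p A B C + cmi p A D (fun ω => (C ω, B ω)) := by
  rw [cmi_comm, cmi_prod_left, cmi_comm p B, cmi_comm p D]

lemma mi_prod_right (A : Ω → α) (B : Ω → β) (D : Ω → δ) :
    mi p A (fun ω => (B ω, D ω)) = mi p A B + cmi p A D B := by
  have e₁ : ent p (fun ω => (A ω, B ω, D ω)) = ent p (fun ω => (A ω, D ω, B ω)) :=
    ent_congr p fun ω ω' => by simp only [Prod.mk.injEq]; tauto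
  have e₂ : ent p (fun ω => (B ω, D ω)) = ent p (fun ω => (D ω, B ω)) :=
    ent_congr p fun ω ω' => by simp only [Prod.mk.injEq]; tauto
  unfold mi cmi
  rw [e₁, e₂]
  ring

lemma cmi_eq_zero_of_const (A : Ω → α) {B : Ω → β} (C : Ω → γ) (hB : ∀ ω ω', B ω = B ω') :
    cmi p A B C = 0 := by
  have e₁ : ent p (fun ω => (B ω, C ω)) = ent p C :=
    ent_congr p fun ω ω' => by simp [hB ω ω']
  have e₂ : ent p (fun ω => (A ω, B ω, C ω)) = ent p (fun ω => (A ω, C ω)) :=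
    ent_congr p fun ω ω' => by simp [hB ω ω']
  unfold cmi
  rw [e₁, e₂]
  ring

end Entropy

section Inequalities

variable {α β γ δ α' : Type*}
  [Fintype α] [DecidableEq α] [Fintype β] [DecidableEq β] [Fintype γ] [DecidableEq γ]
  [Fintype δ] [DecidableEq δ] [Fintype α'] [DecidableEq α'] (p : Ω → ℝ)

lemma sum_mul_prAt_ratio_le (hp0 : ∀ ω, 0 ≤ p ω) (A : Ω → α) (B : Ω → β) (C : Ω → γ) :
    ∑ ω, p ω * (prAt p (fun ω => (A ω, C ω)) ω * prAt p (fun ω => (B ω, C ω)) ω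
      / (prAt p (fun ω => (A ω, B ω, C ω)) ω * prAt p C ω)) ≤ ∑ ω, p ω := by
  set pABC := pr p (fun ω => (A ω, B ω, C ω))
  set pAC := pr p (fun ω => (A ω, C ω))
  set pBC := pr p (fun ω => (B ω, C ω))
  set pC := pr p C
  calc _ = ∑ x : α × β × γ, pABC x * (pAC (x.1, x.2.2) * pBC x.2 / (pABC x * pC x.2.2)) :=
        (sum_pr_mul p _ fun x => pAC (x.1, x.2.2) * pBC x.2 / (pABC x * pC x.2.2)).symm
    _ ≤ ∑ x : α × β × γ, pAC (x.1, x.2.2) * pBC x.2 / pC x.2.2 := by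
        gcongr with x
        rcases eq_or_ne (pABC x) 0 with h | h
        · rw [h, zero_mul]
          exact div_nonneg (mul_nonneg (pr_nonneg p hp0 _ _) (pr_nonneg p hp0 _ _))
            (pr_nonneg p hp0 _ _)
        · rw [mul_div_assoc', mul_div_mul_left _ _ h]
    _ = ∑ c, (∑ a, pAC (a, c)) * (∑ b, pBC (b, c)) / pC c := by
        simp only [Fintype.sum_prod_type, Finset.sum_mul_sum, Finset.sum_div]
        conv_rhs => rw [Finset.sum_comm]
        exact Finset.sum_congr rfl fun a _ => Finset.sum_comm
    _ = ∑ c, pC c := by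
        simp only [pAC, pBC, pC, ← pr_eq_sum_pr_prod, mul_self_div_self]
    _ = ∑ ω, p ω := sum_pr p C

lemma cmi_nonneg (hp0 : ∀ ω, 0 ≤ p ω) (A : Ω → α) (B : Ω → β) (C : Ω → γ) :
    0 ≤ cmi p A B C := by
  set r := fun ω => prAt p (fun ω => (A ω, C ω)) ω * prAt p (fun ω => (B ω, C ω)) ω
      / (prAt p (fun ω => (A ω, B ω, C ω)) ω * prAt p C ω)
  have hlog2 : 0 < Real.log 2 := Real.log_pos one_lt_two
  have hterm : ∀ ω, p ω * (1 - r ω) / Real.log 2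
      ≤ p ω * (Real.logb 2 (prAt p (fun ω => (A ω, B ω, C ω)) ω)
        + Real.logb 2 (prAt p C ω) - Real.logb 2 (prAt p (fun ω => (A ω, C ω)) ω)
        - Real.logb 2 (prAt p (fun ω => (B ω, C ω)) ω)) := by
    intro ω
    rcases (hp0 ω).eq_or_lt with h | h
    · simp [← h]
    have h₁ := prAt_pos p hp0 (fun ω => (A ω, B ω, C ω)) h
    have h₂ := prAt_pos p hp0 C h
    have h₃ := prAt_pos p hp0 (fun ω => (A ω, C ω)) h
    have h₄ := prAt_pos p hp0 (fun ω => (B ω, C ω)) h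
    have hlog : Real.log (r ω) ≤ r ω - 1 := Real.log_le_sub_one_of_pos (by positivity)
    have hr : Real.logb 2 (prAt p (fun ω => (A ω, B ω, C ω)) ω)
        + Real.logb 2 (prAt p C ω) - Real.logb 2 (prAt p (fun ω => (A ω, C ω)) ω)
        - Real.logb 2 (prAt p (fun ω => (B ω, C ω)) ω) = -Real.log (r ω) / Real.log 2 := by
      rw [Real.log_div (by positivity) (by positivity), Real.log_mul h₁.ne' h₂.ne',
        Real.log_mul h₃.ne' h₄.ne']
      simp only [Real.logb]
      ring
    rw [hr, mul_div_assoc', div_le_div_iff_of_pos_right hlog2]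
    exact mul_le_mul_of_nonneg_left (by linarith) h.le
  calc 0 ≤ (∑ ω, p ω - ∑ ω, p ω * r ω) / Real.log 2 :=
        div_nonneg (sub_nonneg.2 (sum_mul_prAt_ratio_le p hp0 A B C)) hlog2.le
    _ = ∑ ω, p ω * (1 - r ω) / Real.log 2 := by
        rw [← Finset.sum_sub_distrib, Finset.sum_div]
        simp only [mul_sub, mul_one]
    _ ≤ _ := (Finset.sum_le_sum fun ω _ => hterm ω).trans_eq (cmi_eq_sum p A B C).symm

lemma cmi_le_cmi_prod_left (hp0 : ∀ ω, 0 ≤ p ω) (A : Ω → α) (B : Ω → β) (C : Ω → γ)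
    (D : Ω → δ) : cmi p A B (fun ω => (C ω, D ω)) ≤ cmi p (fun ω => (D ω, A ω)) B C := by
  rw [cmi_prod_left]
  linarith [cmi_nonneg p hp0 D B C]

lemma cmi_mono_left (hp0 : ∀ ω, 0 ≤ p ω) {A : Ω → α} {A' : Ω → α'} (B : Ω → β) (C : Ω → γ)
    (h : ∀ ω ω', A' ω = A' ω' → A ω = A ω') : cmi p A B C ≤ cmi p A' B C := by
  have hA' : cmi p A' B C = cmi p (fun ω => (A ω, A' ω)) B C :=
    cmi_congr p (fun ω ω' => by
      simp only [Prod.mk.injEq]; exact ⟨fun e => ⟨h ω ω' e, e⟩, fun e => e.2⟩) (fun _ _ => Iff.rfl)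
      (fun _ _ => Iff.rfl)
  rw [hA', cmi_prod_left]
  linarith [cmi_nonneg p hp0 A' B (fun ω => (C ω, A ω))]

lemma mi_eq_zero_of_pr_eq_mul (hp : IsPMF p) {A : Ω → α} {B : Ω → β} (φ : α → ℝ) (ψ : β → ℝ)
    (h : ∀ a b, pr p (fun ω => (A ω, B ω)) (a, b) = φ a * ψ b) : mi p A B = 0 := by
  have hA : ∀ a, pr p A a = φ a * ∑ b, ψ b := fun a => by
    simp [pr_eq_sum_pr_prod_right p A B, h, Finset.mul_sum]
  have hB : ∀ b, pr p B b = (∑ a, φ a) * ψ b := fun b => by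
    simp [pr_eq_sum_pr_prod p B A, h, Finset.sum_mul]
  have hone : (∑ a, φ a) * ∑ b, ψ b = 1 := by
    rw [Finset.sum_mul_sum, ← hp.2, ← sum_pr p fun ω => (A ω, B ω), Fintype.sum_prod_type]
    simp [h]
  have hterm : ∀ ω, p ω * Real.logb 2 (prAt p (fun ω => (A ω, B ω)) ω)
      = p ω * Real.logb 2 (prAt p A ω) + p ω * Real.logb 2 (prAt p B ω) := by
    intro ω
    rcases (hp.1 ω).eq_or_lt with h0 | h0
    · simp [← h0]
    have hprod : prAt p (fun ω => (A ω, B ω)) ω = prAt p A ω * prAt p B ω := by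
      simp only [prAt, h, hA, hB]
      linear_combination (φ (A ω) * ψ (B ω)) * hone.symm
    rw [hprod, Real.logb_mul (prAt_pos p hp.1 A h0).ne' (prAt_pos p hp.1 B h0).ne', mul_add]
  simp only [mi, ent_eq_sum, hterm, Finset.sum_add_distrib]
  ring

lemma cmi_eq_zero_of_pr_eq_mul (hp0 : ∀ ω, 0 ≤ p ω) {A : Ω → α} {B : Ω → β} {C : Ω → γ}
    (φ : α → γ → ℝ) (ψ : β → γ → ℝ)
    (h : ∀ a b c, pr p (fun ω => (A ω, B ω, C ω)) (a, b, c) = φ a c * ψ b c) :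
    cmi p A B C = 0 := by
  have hAC : ∀ a c, pr p (fun ω => (A ω, C ω)) (a, c) = φ a c * ∑ b, ψ b c := fun a c => by
    rw [pr_eq_sum_pr_prod p _ B, Finset.mul_sum]
    refine Finset.sum_congr rfl fun b _ => ?_
    rw [← h]
    exact pr_congr p fun ω => by simp only [Prod.mk.injEq]; tauto
  have hBC : ∀ b c, pr p (fun ω => (B ω, C ω)) (b, c) = (∑ a, φ a c) * ψ b c := fun b c => by
    rw [pr_eq_sum_pr_prod p _ A, Finset.sum_mul]
    simp only [h]
  have hC : ∀ c, pr p C c = (∑ a, φ a c) * ∑ b, ψ b c := fun c => by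
    rw [pr_eq_sum_pr_prod p C A, Finset.sum_mul]
    simp only [hAC]
  rw [cmi_eq_sum]
  refine Finset.sum_eq_zero fun ω _ => ?_
  rcases (hp0 ω).eq_or_lt with h0 | h0
  · simp [← h0]
  have hprod : prAt p (fun ω => (A ω, B ω, C ω)) ω * prAt p C ω
      = prAt p (fun ω => (A ω, C ω)) ω * prAt p (fun ω => (B ω, C ω)) ω := by
    simp only [prAt, h, hAC, hBC, hC]
    ring
  have hlog := congrArg (Real.logb 2) hprod
  rw [Real.logb_mul (prAt_pos p hp0 _ h0).ne' (prAt_pos p hp0 _ h0).ne',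
    Real.logb_mul (prAt_pos p hp0 _ h0).ne' (prAt_pos p hp0 _ h0).ne'] at hlog
  rw [hlog]
  ring

end Inequalities

section ChainRule

variable {α β γ : Type*} [Fintype α] [DecidableEq α] [Fintype β] [DecidableEq β]
  [Fintype γ] [DecidableEq γ] (p : Ω → ℝ)

lemma cmi_pi_eq_sum {n : ℕ} (A : Ω → α) (Y : Fin n → Ω → β) (C : Ω → γ) :
    cmi p A (fun ω i => Y i ω) C = ∑ j : Fin n,
      cmi p A (Y j) (fun ω => (C ω, fun i : {i : Fin n // (i : ℕ) < j} => Y i ω)) := by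
  let G : ℕ → ℝ := fun k => cmi p A (fun ω (i : {i : Fin n // (i : ℕ) < k}) => Y i ω) C
  have hG₀ : G 0 = 0 :=
    cmi_eq_zero_of_const p A C fun _ _ => funext fun i => absurd i.2 (Nat.not_lt_zero _)
  have hGn : G n = cmi p A (fun ω i => Y i ω) C :=
    cmi_congr p (fun _ _ => Iff.rfl) (fun ω ω' => by simp [funext_iff]) (fun _ _ => Iff.rfl)
  have hG_succ : ∀ j : Fin n, G (j + 1) = G j
      + cmi p A (Y j) (fun ω => (C ω, fun i : {i : Fin n // (i : ℕ) < j} => Y i ω)) := by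
    intro j
    rw [← cmi_prod_right]
    refine cmi_congr p (fun _ _ => Iff.rfl) (fun ω ω' => ?_) (fun _ _ => Iff.rfl)
    simp only [funext_iff, Subtype.forall, Prod.mk.injEq]
    constructor
    · intro e
      exact ⟨fun i hi => e i (by omega), e j (by omega)⟩
    · rintro ⟨e, ej⟩ i hi
      rcases Nat.lt_succ_iff_lt_or_eq.1 hi with hi | hi
      · exact e i hi
      · rwa [Fin.ext hi]
  rw [← hGn, ← sub_zero (G n), ← hG₀, ← Finset.sum_range_sub, ← Fin.sum_univ_eq_sum_range]
  exact Finset.sum_congr rfl fun j _ => by rw [hG_succ]; ring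

end ChainRule

section Channel

variable {𝒲₁ 𝒲₂ 𝒮 𝒳 𝒴 : Type*} [DecidableEq 𝒲₁] [DecidableEq 𝒲₂] [DecidableEq 𝒮]
  [DecidableEq 𝒳] [DecidableEq 𝒴] {n : ℕ} (p : Ω → ℝ) {W1 : Ω → 𝒲₁} {W2 : Ω → 𝒲₂}
  {S : Fin n → Ω → 𝒮} {X : Fin n → Ω → 𝒳} {Y : Fin n → Ω → 𝒴}
  {f : 𝒲₁ → 𝒲₂ → (Fin n → 𝒮) → Fin n → 𝒳}

lemma pr_split_output_eq (hf : ∀ ω j, X j ω = f (W1 ω) (W2 ω) (fun i => S i ω) j) (j : Fin n)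
    (w₁ : 𝒲₁) (y' : {i // i ≠ j} → 𝒴) (b : 𝒴) (w₂ : 𝒲₂) (s : Fin n → 𝒮) :
    pr p (fun ω => ((W1 ω, fun i : {i // i ≠ j} => Y i ω), Y j ω,
        ((W2 ω, fun i => S i ω), X j ω))) ((w₁, y'), b, ((w₂, s), f w₁ w₂ s j))
      = pr p (fun ω => (W1 ω, W2 ω, (fun i => S i ω), (fun i => X i ω), (fun i => Y i ω)))
          (w₁, w₂, s, f w₁ w₂ s, fun i => if h : i = j then b else y' ⟨i, h⟩) := by
  refine pr_congr p fun ω => ?_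
  simp only [Prod.mk.injEq, hf]
  constructor
  · rintro ⟨⟨rfl, rfl⟩, rfl, ⟨rfl, rfl⟩, -⟩
    refine ⟨rfl, rfl, rfl, rfl, funext fun i => ?_⟩
    split_ifs with h
    · rw [h]
    · rfl
  · rintro ⟨rfl, rfl, rfl, -, hy⟩
    exact ⟨⟨rfl, funext fun i => by simpa [i.2] using congrFun hy i⟩,
      by simpa using congrFun hy j, ⟨rfl, rfl⟩, rfl⟩

lemma pr_eq_mul_of_memoryless {ch : 𝒴 → 𝒳 × 𝒮 → ℝ}
    (hf : ∀ ω j, X j ω = f (W1 ω) (W2 ω) (fun i => S i ω) j)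
    (hch : ∀ (a : 𝒲₁) (b : 𝒲₂) (s : Fin n → 𝒮) (x : Fin n → 𝒳) (y : Fin n → 𝒴),
      pr p (fun ω => (W1 ω, W2 ω, (fun j => S j ω), (fun j => X j ω), (fun j => Y j ω)))
          (a, b, s, x, y)
        = pr p (fun ω => (W1 ω, W2 ω, (fun j => S j ω), (fun j => X j ω))) (a, b, s, x)
          * ∏ j, ch (y j) (x j, s j))
    (j : Fin n) (a : 𝒲₁ × ({i // i ≠ j} → 𝒴)) (b : 𝒴) (c : (𝒲₂ × (Fin n → 𝒮)) × 𝒳) :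
    pr p (fun ω => ((W1 ω, fun i : {i // i ≠ j} => Y i ω), Y j ω,
        ((W2 ω, fun i => S i ω), X j ω))) (a, b, c)
      = (if c.2 = f a.1 c.1.1 c.1.2 j then
          pr p (fun ω => (W1 ω, W2 ω, fun i => S i ω)) (a.1, c.1.1, c.1.2)
            * ∏ i : {i // i ≠ j}, ch (a.2 i) (f a.1 c.1.1 c.1.2 i, c.1.2 i)
        else 0) * ch b (c.2, c.1.2 j) := by
  obtain ⟨w₁, y'⟩ := a
  obtain ⟨⟨w₂, s⟩, x⟩ := c
  dsimp only
  split_ifs with hx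
  · subst hx
    have hX : pr p (fun ω => (W1 ω, W2 ω, (fun i => S i ω), (fun i => X i ω)))
          (w₁, w₂, s, f w₁ w₂ s)
        = pr p (fun ω => (W1 ω, W2 ω, fun i => S i ω)) (w₁, w₂, s) := by
      refine pr_congr p fun ω => ?_
      simp only [Prod.mk.injEq, hf]
      constructor
      · rintro ⟨h₁, h₂, h₃, -⟩
        exact ⟨h₁, h₂, h₃⟩
      · rintro ⟨rfl, rfl, rfl⟩
        exact ⟨rfl, rfl, rfl, rfl⟩
    rw [pr_split_output_eq p hf, hch, hX, Fintype.prod_eq_mul_prod_subtype_ne _ j, dif_pos rfl,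
      Finset.prod_congr rfl fun i _ => by rw [dif_neg i.2]]
    ring
  · rw [zero_mul]
    refine pr_eq_zero p fun ω e => hx ?_
    simp only [Prod.mk.injEq] at e
    obtain ⟨⟨rfl, -⟩, -, ⟨rfl, rfl⟩, rfl⟩ := e
    exact hf ω j

end Channel

section SingleLetter

variable {𝒲₁ 𝒲₂ 𝒮 𝒳 𝒴 γ : Type*} [Fintype 𝒲₁] [DecidableEq 𝒲₁] [Fintype 𝒲₂]
  [DecidableEq 𝒲₂] [Fintype 𝒮] [DecidableEq 𝒮] [Fintype 𝒳] [DecidableEq 𝒳] [Fintype 𝒴]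
  [DecidableEq 𝒴] [Fintype γ] [DecidableEq γ] {n : ℕ} (p : Ω → ℝ)

lemma cmi_output_le_cmi_input (hp0 : ∀ ω, 0 ≤ p ω) {W1 : Ω → 𝒲₁} {W2 : Ω → 𝒲₂}
    {S : Fin n → Ω → 𝒮} {X : Fin n → Ω → 𝒳} {Y : Fin n → Ω → 𝒴}
    {f : 𝒲₁ → 𝒲₂ → (Fin n → 𝒮) → Fin n → 𝒳} {ch : 𝒴 → 𝒳 × 𝒮 → ℝ}
    (hf : ∀ ω j, X j ω = f (W1 ω) (W2 ω) (fun i => S i ω) j)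
    (hch : ∀ (a : 𝒲₁) (b : 𝒲₂) (s : Fin n → 𝒮) (x : Fin n → 𝒳) (y : Fin n → 𝒴),
      pr p (fun ω => (W1 ω, W2 ω, (fun j => S j ω), (fun j => X j ω), (fun j => Y j ω)))
          (a, b, s, x, y)
        = pr p (fun ω => (W1 ω, W2 ω, (fun j => S j ω), (fun j => X j ω))) (a, b, s, x)
          * ∏ j, ch (y j) (x j, s j))
    (j : Fin n) :
    cmi p W1 (Y j)
        (fun ω => ((W2 ω, fun i => S i ω), fun i : {i : Fin n // (i : ℕ) < j} => Y i ω))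
      ≤ cmi p (X j) (Y j) (fun ω => (W2 ω, fun i => S i ω)) := by
  have h_markov : cmi p (fun ω => (W1 ω, fun i : {i // i ≠ j} => Y i ω)) (Y j)
      (fun ω => ((W2 ω, fun i => S i ω), X j ω)) = 0 :=
    cmi_eq_zero_of_pr_eq_mul p hp0 _ _ (pr_eq_mul_of_memoryless p hf hch j)
  calc _ ≤ cmi p (fun ω => ((fun i : {i : Fin n // (i : ℕ) < j} => Y i ω), W1 ω)) (Y j)
          (fun ω => (W2 ω, fun i => S i ω)) :=
        cmi_le_cmi_prod_left p hp0 _ _ _ _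
    _ ≤ cmi p (fun ω => (X j ω, W1 ω, fun i : {i // i ≠ j} => Y i ω)) (Y j)
          (fun ω => (W2 ω, fun i => S i ω)) :=
        cmi_mono_left p hp0 _ _ fun ω ω' e => by
          simp only [Prod.mk.injEq, funext_iff, Subtype.forall] at e ⊢
          exact ⟨fun i hi => e.2.2 i (Fin.ne_of_lt hi), e.2.1⟩
    _ = cmi p (X j) (Y j) (fun ω => (W2 ω, fun i => S i ω)) := by
        rw [cmi_prod_left, h_markov, add_zero]

lemma cmi_cond_pi_eq_split {α β : Type*} [Fintype α] [DecidableEq α] [Fintype β]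
    [DecidableEq β] (A : Ω → α) (B : Ω → β) (C : Ω → γ) (S : Fin n → Ω → 𝒮) (j : Fin n) :
    cmi p A B (fun ω => (C ω, fun i => S i ω))
      = cmi p A B (fun ω => (S j ω, C ω, (fun i : {i : Fin n // i < j} => S i.1 ω),
          (fun i : {i : Fin n // j < i} => S i.1 ω))) := by
  refine cmi_congr p (fun _ _ => Iff.rfl) (fun _ _ => Iff.rfl) fun ω ω' => ?_
  simp only [Prod.mk.injEq, funext_iff, Subtype.forall]
  constructor
  · rintro ⟨hC, hS⟩
    exact ⟨hS j, hC, fun i _ => hS i, fun i _ => hS i⟩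
  · rintro ⟨hj, hC, hlt, hgt⟩
    refine ⟨hC, fun i => ?_⟩
    rcases lt_trichotomy i j with h | rfl | h
    exacts [hlt i h, hj, hgt i h]

end SingleLetter

theorem bc_R1_converse_general
    {Ω 𝒲₂ 𝒮 𝒳 𝒴 : Type*} [Fintype Ω]
    [Fintype 𝒲₂] [DecidableEq 𝒲₂] [Fintype 𝒮] [DecidableEq 𝒮]
    [Fintype 𝒳] [DecidableEq 𝒳] [Fintype 𝒴] [DecidableEq 𝒴]
    (p : Ω → ℝ) (hp : IsPMF p) (n M1 : ℕ)
    (W1 : Ω → Fin M1) (W2 : Ω → 𝒲₂)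
    (S : Fin n → Ω → 𝒮) (X : Fin n → Ω → 𝒳) (Y : Fin n → Ω → 𝒴)
    (hindep : ∀ (a : Fin M1) (b : 𝒲₂) (s : Fin n → 𝒮),
      pr p (fun ω => (W1 ω, W2 ω, fun j => S j ω)) (a, b, s)
        = pr p W1 a * pr p W2 b * pr p (fun ω => fun j => S j ω) s)
    (henc : ∃ f : Fin M1 → 𝒲₂ → (Fin n → 𝒮) → Fin n → 𝒳,
      ∀ ω j, X j ω = f (W1 ω) (W2 ω) (fun i => S i ω) j)
    (hmem : ∃ ch : 𝒴 → 𝒳 × 𝒮 → ℝ,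
      ∀ (a : Fin M1) (b : 𝒲₂) (s : Fin n → 𝒮) (x : Fin n → 𝒳) (y : Fin n → 𝒴),
        pr p (fun ω => (W1 ω, W2 ω, (fun j => S j ω), (fun j => X j ω),
            (fun j => Y j ω))) (a, b, s, x, y)
          = pr p (fun ω => (W1 ω, W2 ω, (fun j => S j ω), (fun j => X j ω)))
              (a, b, s, x) * ∏ j, ch (y j) (x j, s j))
    (εn : ℝ)
    (hFano : cent p W1 (fun ω => (W2 ω, (fun j => S j ω), (fun j => Y j ω)))
        ≤ (n : ℝ) * εn) :
    ent p W1
      ≤ (∑ j : Fin n, cmi p (X j) (Y j)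
          (fun ω => (S j ω, W2 ω, (fun i : {i : Fin n // i < j} => S i.1 ω),
            (fun i : {i : Fin n // j < i} => S i.1 ω))))
        + (n : ℝ) * εn := by
  obtain ⟨f, hf⟩ := henc
  obtain ⟨ch, hch⟩ := hmem
  let Z := fun ω => (W2 ω, fun i => S i ω)
  have h_split : ent p W1 = mi p W1 Z + cmi p W1 (fun ω i => Y i ω) Z
      + cent p W1 (fun ω => (W2 ω, (fun j => S j ω), (fun j => Y j ω))) := by
    rw [← mi_prod_right, mi_congr p (fun _ _ => Iff.rfl)
      (B' := fun ω => (W2 ω, (fun j => S j ω), (fun j => Y j ω)))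
      fun _ _ => by simp only [Prod.mk.injEq, Z, and_assoc]]
    unfold mi cent
    ring
  have h_indep : mi p W1 Z = 0 :=
    mi_eq_zero_of_pr_eq_mul p hp (pr p W1) (fun z => pr p W2 z.1 * pr p (fun ω i => S i ω) z.2)
      fun a z => by rw [← mul_assoc]; exact hindep a z.1 z.2
  rw [h_split, h_indep, zero_add, cmi_pi_eq_sum]
  gcongr with j
  exact (cmi_output_le_cmi_input p hp.1 hf hch j).trans_eq (cmi_cond_pi_eq_split p _ _ W2 S j)

/-- converse bound on R1 for the degraded BC with host recovery:
H(W1) ≤ Σ_j I(X_j ; Y_j | S_j, U_j) + n·ε_n with U_j = (W2, S^{j−1}, S_{j+1}^n). -/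
theorem bc_R1_converse
    {Ω 𝒲₂ 𝒮 𝒳 𝒴 : Type*} [Fintype Ω]
    [Fintype 𝒲₂] [DecidableEq 𝒲₂] [Fintype 𝒮] [DecidableEq 𝒮]
    [Fintype 𝒳] [DecidableEq 𝒳] [Fintype 𝒴] [DecidableEq 𝒴]
    (p : Ω → ℝ) (hp : IsPMF p) (n M1 : ℕ) (hn : 0 < n) (hM1 : 0 < M1)
    (W1 : Ω → Fin M1) (W2 : Ω → 𝒲₂)
    (S : Fin n → Ω → 𝒮) (X : Fin n → Ω → 𝒳) (Y : Fin n → Ω → 𝒴)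
    (hunif : ∀ w, pr p W1 w = 1 / M1)
    (hindep : ∀ (a : Fin M1) (b : 𝒲₂) (s : Fin n → 𝒮),
      pr p (fun ω => (W1 ω, W2 ω, fun j => S j ω)) (a, b, s)
        = pr p W1 a * pr p W2 b * pr p (fun ω => fun j => S j ω) s)
    (hiid : ∃ q : 𝒮 → ℝ, ∀ s : Fin n → 𝒮,
      pr p (fun ω => fun j => S j ω) s = ∏ j, q (s j))
    (henc : ∃ f : Fin M1 → 𝒲₂ → (Fin n → 𝒮) → Fin n → 𝒳,
      ∀ ω j, X j ω = f (W1 ω) (W2 ω) (fun i => S i ω) j)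
    (hmem : ∃ ch : 𝒴 → 𝒳 × 𝒮 → ℝ,
      ∀ (a : Fin M1) (b : 𝒲₂) (s : Fin n → 𝒮) (x : Fin n → 𝒳) (y : Fin n → 𝒴),
        pr p (fun ω => (W1 ω, W2 ω, (fun j => S j ω), (fun j => X j ω),
            (fun j => Y j ω))) (a, b, s, x, y)
          = pr p (fun ω => (W1 ω, W2 ω, (fun j => S j ω), (fun j => X j ω)))
              (a, b, s, x) * ∏ j, ch (y j) (x j, s j))
    (εn : ℝ)
    (hFano : cent p W1 (fun ω => (W2 ω, (fun j => S j ω), (fun j => Y j ω)))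
        ≤ (n : ℝ) * εn) :
    ent p W1
      ≤ (∑ j : Fin n, cmi p (X j) (Y j)
          (fun ω => (S j ω, W2 ω, (fun i : {i : Fin n // i < j} => S i.1 ω),
            (fun i : {i : Fin n // j < i} => S i.1 ω))))
        + (n : ℝ) * εn :=
  bc_R1_converse_general p hp n M1 W1 W2 S X Y hindep henc hmem εn hFano

end IE
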